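/- arXiv:1501.06851 — 2 statements merged into one kernel-verified Lean document; each statement's English description precedes it below -/
import Mathlib

section
/- For an asynchronous iteration where at each step k an arbitrary nonempty subset S(k) ⊆ {1,…,n} of coordinates is updated via x_i(k+1) = (N + M·x(k))_i for i ∈ S(k) and x_i(k+1) = x_i(k) otherwise, if M is a nonnegative matrix with ρ(M) < 1 and every coordinate is updated infinitely often, then x(k) converges to the fixed point x* = (I−M)^{-1}·N. -/
/-!
By Gelfand's formula some power `M ^ K` has row sums of absolute values below `1`, so
`w = ∑_{k<K} M ^ k 1` is a positive vector with `M w < w` (telescoping), hence `M w ≤ c w`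
for some `c < 1`: a nonnegative `M` contracts the max-norm weighted by `w`. In that norm an
updated coordinate of the error `x k - x*` drops below `c` times the current error while the
others keep their value, so the error never grows and shrinks by the factor `c` over every
time window in which each coordinate is updated. Infinitely many updates of every coordinate
give infinitely many disjoint such windows.
-/

open Filter Topology Matrix

theorem exists_lt_one_forall_le_mul {ι : Type*} [Finite ι] {a b : ι → ℝ}
    (ha : ∀ i, 0 ≤ a i) (hab : ∀ i, a i < b i) :
    ∃ c, 0 ≤ c ∧ c < 1 ∧ ∀ i, a i ≤ c * b i := by
  cases isEmpty_or_nonempty ι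
  · exact ⟨0, le_rfl, one_pos, isEmptyElim⟩
  obtain ⟨i₀, hi₀⟩ := Finite.exists_max fun i => a i / b i
  have hb : ∀ i, 0 < b i := fun i => (ha i).trans_lt (hab i)
  refine ⟨a i₀ / b i₀, div_nonneg (ha i₀) (hb i₀).le, (div_lt_one (hb i₀)).2 (hab i₀),
    fun i => ?_⟩
  exact (div_le_iff₀ (hb i)).1 (hi₀ i)

namespace Matrix

variable {ι : Type*} [Fintype ι]

theorem mulVec_nonneg {M : Matrix ι ι ℝ} (hM : ∀ i j, 0 ≤ M i j) {v : ι → ℝ}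
    (hv : ∀ j, 0 ≤ v j) (i : ι) : 0 ≤ (M *ᵥ v) i :=
  Finset.sum_nonneg fun j _ => mul_nonneg (hM i j) (hv j)

theorem norm_mulVec_div_le {M : Matrix ι ι ℝ} (hM : ∀ i j, 0 ≤ M i j) {w : ι → ℝ}
    (hw : ∀ i, 0 < w i) {c : ℝ} (hc : 0 ≤ c) (hMw : ∀ i, (M *ᵥ w) i ≤ c * w i) (v : ι → ℝ) :
    ‖(M *ᵥ v) / w‖ ≤ c * ‖v / w‖ := by
  have hv : ∀ j, |v j| ≤ ‖v / w‖ * w j := fun j => by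
    have := norm_le_pi_norm (v / w) j
    rwa [Pi.div_apply, Real.norm_eq_abs, abs_div, abs_of_pos (hw j), div_le_iff₀ (hw j)] at this
  refine (pi_norm_le_iff_of_nonneg (by positivity)).2 fun i => ?_
  rw [Pi.div_apply, Real.norm_eq_abs, abs_div, abs_of_pos (hw i), div_le_iff₀ (hw i)]
  calc |(M *ᵥ v) i| ≤ ∑ j, M i j * |v j| := by
        refine (Finset.abs_sum_le_sum_abs _ _).trans_eq (Finset.sum_congr rfl fun j _ => ?_)
        rw [abs_mul, abs_of_nonneg (hM i j)]
    _ ≤ ∑ j, M i j * (‖v / w‖ * w j) :=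
        Finset.sum_le_sum fun j _ => mul_le_mul_of_nonneg_left (hv j) (hM i j)
    _ = ‖v / w‖ * (M *ᵥ w) i := by
        simp only [mulVec, dotProduct, Finset.mul_sum]
        exact Finset.sum_congr rfl fun j _ => by ring
    _ ≤ ‖v / w‖ * (c * w i) := mul_le_mul_of_nonneg_left (hMw i) (norm_nonneg _)
    _ = c * ‖v / w‖ * w i := by ring

variable [DecidableEq ι]

theorem exists_sum_abs_pow_lt_one (M : Matrix ι ι ℝ)
    (hρ : spectralRadius ℂ (M.map (fun x => (x : ℂ))) < 1) :
    ∃ K : ℕ, ∀ i, ∑ j, |(M ^ K) i j| < 1 := by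
  let _ : NormedRing (Matrix ι ι ℂ) := Matrix.linftyOpNormedRing
  let _ : NormedAlgebra ℂ (Matrix ι ι ℂ) := Matrix.linftyOpNormedAlgebra
  set B := M.map Complex.ofRealHom
  obtain ⟨K, hK, hK1⟩ :=
    (((spectrum.pow_nnnorm_pow_one_div_tendsto_nhds_spectralRadius B).eventually_lt_const hρ).and
      (eventually_ge_atTop 1)).exists
  have hBK : ‖B ^ K‖₊ < 1 := by
    have : (‖B ^ K‖₊ : ENNReal) < 1 :=
      lt_of_not_ge fun h => (ENNReal.one_le_rpow h (by positivity)).not_gt hK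
    exact_mod_cast this
  refine ⟨K, fun i => ?_⟩
  have hrow : ∑ j, ‖(B ^ K) i j‖₊ ≤ ‖B ^ K‖₊ := by
    rw [linfty_opNNNorm_def]
    exact Finset.le_sup (f := fun i => ∑ j, ‖(B ^ K) i j‖₊) (Finset.mem_univ i)
  have : ∑ j, ‖(B ^ K) i j‖₊ < 1 := hrow.trans_lt hBK
  rw [← Matrix.map_pow] at this
  simpa [← NNReal.coe_lt_coe] using this

theorem exists_pos_mulVec_le_mul {M : Matrix ι ι ℝ} (hM : ∀ i j, 0 ≤ M i j)
    (hρ : spectralRadius ℂ (M.map (fun x => (x : ℂ))) < 1) :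
    ∃ w : ι → ℝ, (∀ i, 0 < w i) ∧ ∃ c, 0 ≤ c ∧ c < 1 ∧ ∀ i, (M *ᵥ w) i ≤ c * w i := by
  obtain ⟨K, hK⟩ := M.exists_sum_abs_pow_lt_one hρ
  set w : ι → ℝ := ∑ k ∈ Finset.range K, M ^ k *ᵥ 1
  have hw_nonneg : ∀ i, 0 ≤ w i := by
    have hpow : ∀ k, ∀ i, 0 ≤ (M ^ k *ᵥ 1) i := by
      intro k
      induction k with
      | zero => simp
      | succ k ih => rw [pow_succ', ← mulVec_mulVec]; exact mulVec_nonneg hM ih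
    intro i
    simp only [w, Finset.sum_apply]
    exact Finset.sum_nonneg fun k _ => hpow k i
  have htel : M *ᵥ w + 1 = w + M ^ K *ᵥ 1 := by
    simp only [w, mulVec_sum, mulVec_mulVec, ← pow_succ']
    rw [← Finset.sum_range_succ, Finset.sum_range_succ', pow_zero, one_mulVec]
  have hrow : ∀ i, (M ^ K *ᵥ 1) i < 1 := fun i =>
    calc (M ^ K *ᵥ 1) i = ∑ j, (M ^ K) i j := by simp [mulVec, dotProduct]
      _ ≤ ∑ j, |(M ^ K) i j| := Finset.sum_le_sum fun j _ => le_abs_self _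
      _ < 1 := hK i
  have hMw_lt : ∀ i, (M *ᵥ w) i < w i := fun i => by
    have := congrFun htel i
    simp only [Pi.add_apply, Pi.one_apply] at this
    linarith [hrow i]
  obtain ⟨c, hc0, hc1, hc⟩ := exists_lt_one_forall_le_mul (mulVec_nonneg hM hw_nonneg) hMw_lt
  exact ⟨w, fun i => (mulVec_nonneg hM hw_nonneg i).trans_lt (hMw_lt i), c, hc0, hc1, hc⟩

theorem isUnit_det_one_sub_of_spectralRadius_lt_one (M : Matrix ι ι ℝ)
    (hρ : spectralRadius ℂ (M.map (fun x => (x : ℂ))) < 1) : IsUnit (1 - M).det := by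
  let _ : NormedRing (Matrix ι ι ℂ) := Matrix.linftyOpNormedRing
  let _ : NormedAlgebra ℂ (Matrix ι ι ℂ) := Matrix.linftyOpNormedAlgebra
  have h1 : (1 : ℂ) ∈ resolventSet ℂ (M.map (fun x => (x : ℂ))) :=
    spectrum.mem_resolventSet_of_spectralRadius_lt (by simpa using hρ)
  rw [spectrum.mem_resolventSet_iff, map_one, isUnit_iff_isUnit_det] at h1
  have hmap : 1 - M.map (fun x => (x : ℂ)) = Complex.ofRealHom.mapMatrix (1 - M) := by
    simp [map_sub, Complex.ofRealHom]
  rw [hmap, ← RingHom.map_det, isUnit_iff_ne_zero, map_ne_zero] at h1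
  exact h1.isUnit

theorem add_mulVec_inv_one_sub_mulVec {R : Type*} [CommRing R] {M : Matrix ι ι R}
    (h : IsUnit (1 - M).det) (N : ι → R) :
    N + M *ᵥ ((1 - M)⁻¹ *ᵥ N) = (1 - M)⁻¹ *ᵥ N := by
  have hN : (1 - M) *ᵥ ((1 - M)⁻¹ *ᵥ N) = N := by
    rw [mulVec_mulVec, mul_nonsing_inv _ h, one_mulVec]
  rw [sub_mulVec, one_mulVec, sub_eq_iff_eq_add] at hN
  exact hN.symm

end Matrix

/-- The errors `e k` of an asynchronous iteration: at step `k` the coordinates in `S k` are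
updated by a map contracting the sup norm with factor `c`, the others are left unchanged. -/
structure IsAsyncContraction {ι E : Type*} [Fintype ι] [SeminormedAddCommGroup E] (c : ℝ)
    (S : ℕ → Set ι) (e : ℕ → ι → E) : Prop where
  norm_apply_succ_le_of_mem : ∀ k i, i ∈ S k → ‖e (k + 1) i‖ ≤ c * ‖e k‖
  apply_succ_of_notMem : ∀ k i, i ∉ S k → e (k + 1) i = e k i

namespace IsAsyncContraction

variable {ι E : Type*} [Fintype ι] [SeminormedAddCommGroup E] {c : ℝ} {S : ℕ → Set ι}
  {e : ℕ → ι → E}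

theorem antitone_norm (he : IsAsyncContraction c S e) (hc : c ≤ 1) :
    Antitone fun k => ‖e k‖ := by
  refine antitone_nat_of_succ_le fun k => (pi_norm_le_iff_of_nonneg (norm_nonneg _)).2 fun i => ?_
  by_cases hi : i ∈ S k
  · exact (he.norm_apply_succ_le_of_mem k i hi).trans
      (mul_le_of_le_one_left (norm_nonneg _) hc)
  · rw [he.apply_succ_of_notMem k i hi]
    exact norm_le_pi_norm _ i

theorem norm_apply_le_of_mem (he : IsAsyncContraction c S e) (hc0 : 0 ≤ c) (hc1 : c ≤ 1)
    {t s k : ℕ} {i : ι} (hts : t ≤ s) (hsk : s < k) (hi : i ∈ S s) :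
    ‖e k i‖ ≤ c * ‖e t‖ := by
  induction k with
  | zero => omega
  | succ k ih =>
    by_cases hik : i ∈ S k
    · exact (he.norm_apply_succ_le_of_mem k i hik).trans <|
        mul_le_mul_of_nonneg_left (he.antitone_norm hc1 (by omega)) hc0
    · have hsk' : s < k := lt_of_le_of_ne (Nat.lt_succ_iff.1 hsk) fun h => hik (h ▸ hi)
      rw [he.apply_succ_of_notMem k i hik]
      exact ih hsk'

theorem norm_le_mul_of_forall_mem (he : IsAsyncContraction c S e) (hc0 : 0 ≤ c) (hc1 : c ≤ 1)
    {t k : ℕ} (h : ∀ i, ∃ s, t ≤ s ∧ s < k ∧ i ∈ S s) : ‖e k‖ ≤ c * ‖e t‖ :=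
  (pi_norm_le_iff_of_nonneg (by positivity)).2 fun i =>
    let ⟨_, hts, hsk, hi⟩ := h i
    he.norm_apply_le_of_mem hc0 hc1 hts hsk hi

omit [Fintype ι] in
theorem exists_forall_mem_of_infinite [Finite ι] (hS : ∀ i, {k | i ∈ S k}.Infinite) (t : ℕ) :
    ∃ k, ∀ i, ∃ s, t ≤ s ∧ s < k ∧ i ∈ S s := by
  choose s hs hts using fun i => (hS i).exists_gt t
  obtain ⟨k, hk⟩ := Finite.exists_le s
  exact ⟨k + 1, fun i => ⟨s i, (hts i).le, Nat.lt_succ_of_le (hk i), hs i⟩⟩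

theorem exists_norm_le_pow_mul (he : IsAsyncContraction c S e) (hc0 : 0 ≤ c) (hc1 : c ≤ 1)
    (hS : ∀ i, {k | i ∈ S k}.Infinite) (m : ℕ) : ∃ k, ‖e k‖ ≤ c ^ m * ‖e 0‖ := by
  induction m with
  | zero => exact ⟨0, by simp⟩
  | succ m ih =>
    obtain ⟨t, ht⟩ := ih
    obtain ⟨k, hk⟩ := exists_forall_mem_of_infinite hS t
    refine ⟨k, (he.norm_le_mul_of_forall_mem hc0 hc1 hk).trans ?_⟩
    rw [pow_succ']
    exact mul_le_mul_of_nonneg_left ht hc0 |>.trans_eq (mul_assoc _ _ _).symm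

theorem tendsto_zero (he : IsAsyncContraction c S e) (hc0 : 0 ≤ c) (hc1 : c < 1)
    (hS : ∀ i, {k | i ∈ S k}.Infinite) : Tendsto e atTop (𝓝 0) := by
  rw [tendsto_zero_iff_norm_tendsto_zero]
  have hgeom : Tendsto (fun m => c ^ m * ‖e 0‖) atTop (𝓝 0) := by
    simpa using (tendsto_pow_atTop_nhds_zero_of_lt_one hc0 hc1).mul_const ‖e 0‖
  refine tendsto_order.2
    ⟨fun a ha => Eventually.of_forall fun k => ha.trans_le (norm_nonneg _), fun ε hε => ?_⟩
  obtain ⟨m, hm⟩ := (hgeom.eventually (gt_mem_nhds hε)).exists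
  obtain ⟨k, hk⟩ := he.exists_norm_le_pow_mul hc0 hc1.le hS m
  filter_upwards [eventually_ge_atTop k] with j hj
  exact ((he.antitone_norm hc1.le hj).trans hk).trans_lt hm

end IsAsyncContraction

theorem stmt14_general {n : ℕ} (M : Matrix (Fin n) (Fin n) ℝ) (N : Fin n → ℝ)
    (hMnn : ∀ i j, 0 ≤ M i j)
    (hρ : spectralRadius ℂ (M.map (fun x => (x : ℂ))) < 1)
    (S : ℕ → Finset (Fin n))
    (hinf : ∀ i : Fin n, {k : ℕ | i ∈ S k}.Infinite)
    (x : ℕ → Fin n → ℝ)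
    (hupd : ∀ k i, (i ∈ S k → x (k + 1) i = (N + M.mulVec (x k)) i) ∧
                   (i ∉ S k → x (k + 1) i = x k i)) :
    Filter.Tendsto x Filter.atTop (nhds ((1 - M)⁻¹.mulVec N)) := by
  obtain ⟨w, hw, c, hc0, hc1, hMw⟩ := exists_pos_mulVec_le_mul hMnn hρ
  set xs := (1 - M)⁻¹ *ᵥ N
  have hfix : N + M *ᵥ xs = xs :=
    add_mulVec_inv_one_sub_mulVec (M.isUnit_det_one_sub_of_spectralRadius_lt_one hρ) N
  have he : IsAsyncContraction c (fun k => (S k : Set (Fin n))) fun k => (x k - xs) / w := by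
    refine ⟨fun k i hi => ?_, fun k i hi => ?_⟩
    · have hstep : x (k + 1) i - xs i = (M *ᵥ (x k - xs)) i := by
        have := congrFun hfix i
        simp only [(hupd k i).1 hi, mulVec_sub, Pi.add_apply, Pi.sub_apply] at this ⊢
        linarith
      calc ‖((x (k + 1) - xs) / w) i‖ = ‖((M *ᵥ (x k - xs)) / w) i‖ := by
            simp only [Pi.div_apply, Pi.sub_apply, hstep]
        _ ≤ ‖(M *ᵥ (x k - xs)) / w‖ := norm_le_pi_norm _ i
        _ ≤ c * ‖(x k - xs) / w‖ := norm_mulVec_div_le hMnn hw hc0 hMw _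
    · simp only [Pi.div_apply, Pi.sub_apply, (hupd k i).2 hi]
  have hx : x = fun k => xs + (x k - xs) / w * w := funext fun k => by
    ext i; simp [div_mul_cancel₀ _ (hw i).ne']
  rw [hx]
  simpa using tendsto_const_nhds.add ((he.tendsto_zero hc0 hc1 hinf).mul_const w)

/-- Asynchronous convergence: if `M` is nonnegative with `ρ(M) < 1` and every coordinate
is updated infinitely often, the asynchronous iterates converge to `(I − M)⁻¹·N`. -/
theorem stmt14 {n : ℕ} (M : Matrix (Fin n) (Fin n) ℝ) (N : Fin n → ℝ)
    (hMnn : ∀ i j, 0 ≤ M i j)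
    (hρ : spectralRadius ℂ (M.map (fun x => (x : ℂ))) < 1)
    (S : ℕ → Finset (Fin n)) (hS : ∀ k, (S k).Nonempty)
    (hinf : ∀ i : Fin n, {k : ℕ | i ∈ S k}.Infinite)
    (x : ℕ → Fin n → ℝ)
    (hupd : ∀ k i, (i ∈ S k → x (k + 1) i = (N + M.mulVec (x k)) i) ∧
                   (i ∉ S k → x (k + 1) i = x k i)) :
    Filter.Tendsto x Filter.atTop (nhds ((1 - M)⁻¹.mulVec N)) :=
  stmt14_general M N hMnn hρ S hinf x hupd
end

section
/- In the multi-objective problem: minimize P1 + P2 subject to P1, P2 ≥ 0, P1 + P2 ≤ P_max, and min(V1, η1(P1)) + min(V2, η2(P2)) ≥ R*, where η_x(P) = W_x·log2(1+P/E_x) and R* = min(V1, η1(P1°)) + min(V2, η2(P2°)) is the optimal value of the rate-maximization problem, an optimal solution satisfies η_x(P_x) ≤ V_x whenever V_x ≥ 0 for x = 1,2 (i.e., it never pays to exceed the backhaul caps). -/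
open Set

/-! If a link's rate exceeded its cap `V ≥ 0`, then by the intermediate value theorem
(the rate is continuous in the power and vanishes at zero power) a strictly smaller power on that
link already attains the cap, so the capped rate is unchanged while the total power drops. -/

theorem continuousOn_mul_logb_one_add_div (W : ℝ) {E : ℝ} (hE : 0 < E) :
    ContinuousOn (fun P => W * Real.logb 2 (1 + P / E)) (Ici 0) := by
  refine continuousOn_const.mul (ContinuousOn.logb (by fun_prop) fun P hP => ?_)
  have : 0 ≤ P / E := div_nonneg hP hE.le
  positivity

theorem le_cap_of_power_minimal {f : ℝ → ℝ} {V c R P : ℝ} (hf : ContinuousOn f (Icc 0 P))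
    (hV : f 0 ≤ V) (hP : 0 ≤ P) (hrate : R ≤ min V (f P) + c)
    (hmin : ∀ Q ∈ Ico 0 P, R ≤ min V (f Q) + c → P ≤ Q) : f P ≤ V := by
  by_contra! hgt
  obtain ⟨Q, hQ, hfQ⟩ := intermediate_value_Ico hP hf ⟨hV, hgt⟩
  have hcapped : min V (f Q) = min V (f P) := by rw [hfQ, min_self, min_eq_left hgt.le]
  exact hQ.2.not_ge (hmin Q hQ (hcapped ▸ hrate))

theorem stmt18_general (W1 W2 E1 E2 Pmax V1 V2 Rstar P1 P2 : ℝ)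
    (hE1 : 0 < E1) (hE2 : 0 < E2)
    (η1 η2 : ℝ → ℝ)
    (hη1 : η1 = fun P => W1 * Real.logb 2 (1 + P / E1))
    (hη2 : η2 = fun P => W2 * Real.logb 2 (1 + P / E2))
    (hfeas1 : 0 ≤ P1) (hfeas2 : 0 ≤ P2) (hfeas3 : P1 + P2 ≤ Pmax)
    (hrate : Rstar ≤ min V1 (η1 P1) + min V2 (η2 P2))
    (hopt : ∀ Q1 Q2 : ℝ, 0 ≤ Q1 → 0 ≤ Q2 → Q1 + Q2 ≤ Pmax →
        Rstar ≤ min V1 (η1 Q1) + min V2 (η2 Q2) → P1 + P2 ≤ Q1 + Q2) :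
    (0 ≤ V1 → η1 P1 ≤ V1) ∧ (0 ≤ V2 → η2 P2 ≤ V2) := by
  have hcont1 : ContinuousOn η1 (Icc 0 P1) :=
    hη1 ▸ (continuousOn_mul_logb_one_add_div W1 hE1).mono Icc_subset_Ici_self
  have hcont2 : ContinuousOn η2 (Icc 0 P2) :=
    hη2 ▸ (continuousOn_mul_logb_one_add_div W2 hE2).mono Icc_subset_Ici_self
  constructor
  · intro hV1
    refine le_cap_of_power_minimal hcont1 (by simpa [hη1] using hV1) hfeas1 hrate
      fun Q hQ hQrate => ?_
    linarith [hopt Q P2 hQ.1 hfeas2 (by linarith [hQ.2]) hQrate]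
  · intro hV2
    refine le_cap_of_power_minimal hcont2 (by simpa [hη2] using hV2) hfeas2
      (hrate.trans_eq (add_comm _ _)) fun Q hQ hQrate => ?_
    linarith [hopt P1 Q hfeas1 hQ.1 (by linarith [hQ.2]) (hQrate.trans_eq (add_comm _ _))]

/-- At an optimum of the power-minimization problem subject to achieving the capped rate
`R*`, no link's rate strictly exceeds its nonnegative backhaul cap. -/
theorem stmt18 (W1 W2 E1 E2 Pmax V1 V2 Rstar P1 P2 : ℝ)
    (hW1 : 0 < W1) (hW2 : 0 < W2) (hE1 : 0 < E1) (hE2 : 0 < E2) (hPmax : 0 < Pmax)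
    (η1 η2 : ℝ → ℝ)
    (hη1 : η1 = fun P => W1 * Real.logb 2 (1 + P / E1))
    (hη2 : η2 = fun P => W2 * Real.logb 2 (1 + P / E2))
    (hRstar : IsGreatest {r : ℝ | ∃ Q1 Q2 : ℝ, 0 ≤ Q1 ∧ 0 ≤ Q2 ∧ Q1 + Q2 ≤ Pmax ∧
        r = min V1 (η1 Q1) + min V2 (η2 Q2)} Rstar)
    (hfeas1 : 0 ≤ P1) (hfeas2 : 0 ≤ P2) (hfeas3 : P1 + P2 ≤ Pmax)
    (hrate : Rstar ≤ min V1 (η1 P1) + min V2 (η2 P2))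
    (hopt : ∀ Q1 Q2 : ℝ, 0 ≤ Q1 → 0 ≤ Q2 → Q1 + Q2 ≤ Pmax →
        Rstar ≤ min V1 (η1 Q1) + min V2 (η2 Q2) → P1 + P2 ≤ Q1 + Q2) :
    (0 ≤ V1 → η1 P1 ≤ V1) ∧ (0 ≤ V2 → η2 P2 ≤ V2) :=
  stmt18_general W1 W2 E1 E2 Pmax V1 V2 Rstar P1 P2 hE1 hE2 η1 η2 hη1 hη2 hfeas1 hfeas2 hfeas3 hrate
    hopt
end
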